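/- arXiv:1508.03992 — 3 statements merged into one kernel-verified Lean document; each statement's English description precedes it below -/
import Mathlib

section
/- Under the same hypotheses, the number of items packed in bins containing exactly L items is at least n - (L-1)·ε·n, and hence the number of bins containing exactly L items is at least (n/L)·(1 - (L-1)·ε). -/
theorem many_full_bins (n L : ℕ) (hn : 0 < n) (hL : 0 < L) (ε : ℝ) (hε : 0 ≤ ε)
    (k : ℕ → ℕ)
    (hpack : (∑ j ∈ Finset.Icc 1 L, j * k j) = n)
    (hbins : (∑ j ∈ Finset.Icc 1 L, (k j : ℝ)) ≤ (1 + ε) * n / L) :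
    (k L : ℝ) ≥ ((n : ℝ) / L) * (1 - ((L : ℝ) - 1) * ε) := by
  have hL1 : (1:ℝ) ≤ L := by exact_mod_cast hL
  have hLpos : (0:ℝ) < L := by linarith
  have hnpos : (0:ℝ) < n := by exact_mod_cast hn
  have hpackR : (∑ j ∈ Finset.Icc 1 L, (j:ℝ) * k j) = n := by
    exact_mod_cast hpack
  have key : ∀ j ∈ Finset.Icc 1 L,
      (j:ℝ) * k j ≤ ((L:ℝ) - 1) * k j + (if j = L then (k L : ℝ) else 0) := by
    intro j hj
    simp only [Finset.mem_Icc] at hj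
    by_cases h : j = L
    · subst h; simp; ring_nf; nlinarith [Nat.cast_nonneg (α := ℝ) (k j)]
    · simp [h]
      have : (j:ℝ) ≤ (L:ℝ) - 1 := by
        have : j + 1 ≤ L := Nat.succ_le_of_lt (lt_of_le_of_ne hj.2 h)
        have := (Nat.cast_le (α := ℝ)).2 this
        push_cast at this; linarith
      nlinarith [Nat.cast_nonneg (α := ℝ) (k j)]
  have hsum : (n:ℝ) ≤ ((L:ℝ) - 1) * (∑ j ∈ Finset.Icc 1 L, (k j : ℝ)) + k L := by
    calc (n:ℝ) = ∑ j ∈ Finset.Icc 1 L, (j:ℝ) * k j := hpackR.symm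
    _ ≤ ∑ j ∈ Finset.Icc 1 L, (((L:ℝ) - 1) * k j + (if j = L then (k L : ℝ) else 0)) :=
        Finset.sum_le_sum key
    _ = ((L:ℝ) - 1) * (∑ j ∈ Finset.Icc 1 L, (k j : ℝ)) + k L := by
        rw [Finset.sum_add_distrib, ← Finset.mul_sum, Finset.sum_ite_eq' _ L]
        simp only [Finset.mem_Icc]
        rw [if_pos ⟨hL, le_refl L⟩]
  have hb : ((L:ℝ) - 1) * (∑ j ∈ Finset.Icc 1 L, (k j : ℝ)) ≤
      ((L:ℝ) - 1) * ((1 + ε) * n / L) := by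
    apply mul_le_mul_of_nonneg_left hbins (by linarith)
  have he : ((L:ℝ)-1) * ((1+ε)*n/L) = ((L:ℝ)-1)*(1+ε)*n/L := by ring
  have h3 : (n:ℝ) ≤ ((L:ℝ)-1)*(1+ε)*(n:ℝ)/L + k L := by linarith
  have h4 := mul_le_mul_of_nonneg_right h3 hLpos.le
  rw [add_mul, div_mul_cancel₀ _ hLpos.ne'] at h4
  rw [ge_iff_le, div_mul_eq_mul_div, div_le_iff₀ hLpos]
  nlinarith
end

section
/- Lower bound for (1+ε, β): For 0 < ε < 1/4 with δ = 2ε, in any packing of n items of size 1-δ (each a distinct colour) together with n items of size δ (one common colour) using at most (1+ε)n unit bins, the items of the common colour span at least n(1/2 + ε) bins. -/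
theorem lower_bound_small_bin_stretch (n : ℕ) (hn : 0 < n) (ε δ : ℝ)
    (hε0 : 0 < ε) (hε : ε < 1/4) (hδ : δ = 2 * ε)
    (hεn : ∃ a : ℕ, (a : ℝ) = ε * n) (hδn : ∃ a : ℕ, (a : ℝ) = δ * n)
    (binBig binSmall : Fin n → ℕ)
    (hvalid : ∀ b : ℕ,
      ((Finset.univ.filter (fun i => binBig i = b)).card : ℝ) * (1 - δ) +
      ((Finset.univ.filter (fun i => binSmall i = b)).card : ℝ) * δ ≤ 1)
    (htotal : ((Finset.image binBig Finset.univ ∪ Finset.image binSmall Finset.univ).card : ℝ)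
        ≤ (1 + ε) * n) :
    ((Finset.image binSmall Finset.univ).card : ℝ) ≥ n * (1/2 + ε) := by
  subst hδ
  have hδ0 : (0:ℝ) < 2 * ε := by linarith
  set B := Finset.image binBig Finset.univ with hB
  set S := Finset.image binSmall Finset.univ with hS
  -- binBig is injective
  have hinj : Function.Injective binBig := by
    intro i j hij
    by_contra hne
    have hsub : ({i, j} : Finset (Fin n)) ⊆ Finset.univ.filter (fun k => binBig k = binBig i) := by
      intro k hk
      simp only [Finset.mem_insert, Finset.mem_singleton] at hk
      rcases hk with rfl | rfl <;> simp [hij]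
    have hcard2 : 2 ≤ (Finset.univ.filter (fun k => binBig k = binBig i)).card := by
      have := Finset.card_le_card hsub
      rwa [Finset.card_insert_of_notMem (by simpa using hne), Finset.card_singleton] at this
    have hv := hvalid (binBig i)
    have h2 : (2:ℝ) ≤ ((Finset.univ.filter (fun k => binBig k = binBig i)).card : ℝ) := by
      exact_mod_cast hcard2
    have h0 : (0:ℝ) ≤ ((Finset.univ.filter (fun k => binSmall k = binBig i)).card : ℝ) := by
      positivity
    nlinarith [mul_nonneg h0 hδ0.le]
  have hBcard : (B.card : ℝ) = n := by
    rw [hB, Finset.card_image_of_injective _ hinj, Finset.card_univ, Fintype.card_fin]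
  -- split S into mixed bins M and small-only bins T
  set M := S ∩ B with hM
  set T := S \ B with hT
  have hST : M.card + T.card = S.card := Finset.card_inter_add_card_sdiff S B
  -- T.card ≤ ε n
  have hTle : (T.card : ℝ) ≤ ε * n := by
    have hun : B ∪ T = B ∪ S := Finset.union_sdiff_self_eq_union
    have hdisj : Disjoint B T := Finset.disjoint_sdiff
    have hcardu : (B ∪ S).card = B.card + T.card := by
      rw [← hun, Finset.card_union_of_disjoint hdisj]
    have := htotal
    rw [hcardu] at this
    push_cast at this
    rw [hBcard] at this
    linarith
  -- fiberwise count of small items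
  have hfib : (Finset.univ : Finset (Fin n)).card =
      ∑ b ∈ S, (Finset.univ.filter (fun i => binSmall i = b)).card :=
    Finset.card_eq_sum_card_fiberwise (fun i _ => Finset.mem_image_of_mem _ (Finset.mem_univ i))
  have hsplit : ∑ b ∈ M, (Finset.univ.filter (fun i => binSmall i = b)).card
      + ∑ b ∈ T, (Finset.univ.filter (fun i => binSmall i = b)).card
      = ∑ b ∈ S, (Finset.univ.filter (fun i => binSmall i = b)).card :=
    Finset.sum_inter_add_sum_sdiff S B _
  -- each mixed bin has at most one small item
  have hMbound : ∀ b ∈ M, ((Finset.univ.filter (fun i => binSmall i = b)).card : ℝ) ≤ 1 := by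
    intro b hb
    have hbB : b ∈ B := (Finset.mem_inter.mp hb).2
    obtain ⟨i, -, hi⟩ := Finset.mem_image.mp hbB
    have h1 : (1:ℝ) ≤ ((Finset.univ.filter (fun k => binBig k = b)).card : ℝ) := by
      have : i ∈ Finset.univ.filter (fun k => binBig k = b) := by simp [hi]
      have := Finset.card_pos.mpr ⟨i, this⟩
      exact_mod_cast this
    have hv := hvalid b
    nlinarith
  -- each small-only bin has at most 1/(2ε) small items
  have hTbound : ∀ b ∈ T, ((Finset.univ.filter (fun i => binSmall i = b)).card : ℝ) * (2 * ε) ≤ 1 := by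
    intro b hb
    have hv := hvalid b
    have h0 : (0:ℝ) ≤ ((Finset.univ.filter (fun k => binBig k = b)).card : ℝ) := by positivity
    nlinarith [mul_nonneg h0 (by linarith : (0:ℝ) ≤ 1 - 2 * ε)]
  -- sum over M
  have hMs : (∑ b ∈ M, ((Finset.univ.filter (fun i => binSmall i = b)).card : ℝ)) ≤ M.card := by
    calc (∑ b ∈ M, ((Finset.univ.filter (fun i => binSmall i = b)).card : ℝ))
        ≤ ∑ _b ∈ M, (1:ℝ) := Finset.sum_le_sum hMbound
      _ = M.card := by simp
  have hTs : (∑ b ∈ T, ((Finset.univ.filter (fun i => binSmall i = b)).card : ℝ)) * (2 * ε)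
      ≤ T.card := by
    rw [Finset.sum_mul]
    calc (∑ b ∈ T, ((Finset.univ.filter (fun i => binSmall i = b)).card : ℝ) * (2 * ε))
        ≤ ∑ _b ∈ T, (1:ℝ) := Finset.sum_le_sum hTbound
      _ = T.card := by simp
  have hn' : (n : ℝ) = (∑ b ∈ M, ((Finset.univ.filter (fun i => binSmall i = b)).card : ℝ))
      + (∑ b ∈ T, ((Finset.univ.filter (fun i => binSmall i = b)).card : ℝ)) := by
    have : ((Finset.univ : Finset (Fin n)).card : ℝ)
        = ∑ b ∈ S, ((Finset.univ.filter (fun i => binSmall i = b)).card : ℝ) := by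
      exact_mod_cast congrArg (Nat.cast : ℕ → ℝ) hfib
    rw [Finset.card_univ, Fintype.card_fin] at this
    rw [this]
    exact_mod_cast hsplit.symm
  -- key inequality: (n - M.card) * 2ε ≤ T.card
  have hkey : ((n : ℝ) - M.card) * (2 * ε) ≤ T.card := by
    have : (n : ℝ) - M.card ≤ ∑ b ∈ T, ((Finset.univ.filter (fun i => binSmall i = b)).card : ℝ) := by
      linarith
    calc ((n : ℝ) - M.card) * (2 * ε)
        ≤ (∑ b ∈ T, ((Finset.univ.filter (fun i => binSmall i = b)).card : ℝ)) * (2 * ε) := by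
          apply mul_le_mul_of_nonneg_right this hδ0.le
      _ ≤ T.card := hTs
  have hScard : (S.card : ℝ) = (M.card : ℝ) + T.card := by exact_mod_cast hST.symm
  rw [hScard]
  nlinarith [mul_nonneg (by linarith : (0:ℝ) ≤ ε * n - T.card) (by linarith : (0:ℝ) ≤ 1 - 2 * ε)]
end

section
/- Key lemma for BBF (Lemma: bounded-space best-fit dominance): Let b = (B_{-(k-1)},...,B_0) be k initially open bins possibly containing items, and let P = (B_1,...,B_x) be a valid packing of a set S into x unit bins. If the items of S are presented to the Bounded Best-Fit algorithm with k open bins in the order B_1, B_2, ..., B_x (items of B_1 first, etc.), then each item of bin B_i in P is placed by BBF into a bin with index at most i; in particular BBF uses at most k + x bins in total. -/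
open Classical in
/-- Index (in the list of open-bin loads) of the fullest open bin with room
for an item of size `s`, if any: Best Fit choice. -/
noncomputable def bestFitIdx (s : ℝ) (bins : List ℝ) : Option ℕ :=
  (((bins.zipIdx.map Prod.swap).filter (fun p => p.2 + s ≤ 1)).argmax (fun p => p.2)).map (fun p => p.1)

open Classical in
/-- Index of the fullest open bin (the one Best Fit closes when no bin has room). -/
noncomputable def fullestIdx (bins : List ℝ) : ℕ :=
  (((bins.zipIdx.map Prod.swap).argmax (fun p => p.2)).map (fun p => p.1)).getD 0

open Classical in
/-- One step of Bounded Best-Fit.  The state is the list of loads of the open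
bins together with the number of bins closed so far.  An arriving item of size
`s` is placed in the fullest open bin with room for it; if there is none, the
fullest open bin is closed (never to be reopened) and replaced by a new empty
bin receiving the item. -/
noncomputable def bbfStep (st : List ℝ × ℕ) (s : ℝ) : List ℝ × ℕ :=
  match bestFitIdx s st.1 with
  | some i => (st.1.set i (st.1.getD i 0 + s), st.2)
  | none => (st.1.set (fullestIdx st.1) s, st.2 + 1)

/-!
Within the items of one bin `B` of the packing, Best Fit closes at most once. A closing step opens
a new bin holding the current item of `B`; since `B` fits into a unit bin, that open bin has room
for each of the remaining items of `B` in turn (an open bin's load only grows by the item it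
receives), and Best Fit never closes while some open bin has room. So processing `B₁, …, B_x`
closes at most `x` bins.
-/

lemma mem_map_swap_zipIdx {α : Type*} {l : List α} {p : ℕ × α} :
    p ∈ l.zipIdx.map Prod.swap ↔ l[p.1]? = some p.2 := by
  rw [List.mem_map]
  constructor
  · rintro ⟨q, hq, rfl⟩
    exact List.mem_zipIdx_iff_getElem?.mp hq
  · intro h
    exact ⟨p.swap, List.mem_zipIdx_iff_getElem?.mpr h, p.swap_swap⟩

section BestFit

variable {s : ℝ} {bins : List ℝ}

lemma bestFitIdx_ne_none {j : ℕ} (hj : j < bins.length) (hroom : bins[j] + s ≤ 1) :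
    bestFitIdx s bins ≠ none := by
  have hmem : (j, bins[j]) ∈ (bins.zipIdx.map Prod.swap).filter (fun p => p.2 + s ≤ 1) :=
    List.mem_filter.mpr ⟨mem_map_swap_zipIdx.mpr (List.getElem?_eq_getElem hj), by simpa using hroom⟩
  rw [bestFitIdx, Ne, Option.map_eq_none_iff, List.argmax_eq_none]
  exact List.ne_nil_of_mem hmem

lemma fullestIdx_lt_length (h : bins ≠ []) : fullestIdx bins < bins.length := by
  obtain ⟨p, hp⟩ := Option.ne_none_iff_exists'.mp <| show
      (bins.zipIdx.map Prod.swap).argmax (fun p => p.2) ≠ none by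
    simpa [List.argmax_eq_none] using h
  have hget := mem_map_swap_zipIdx.mp (List.argmax_mem hp)
  simpa [fullestIdx, hp] using (List.getElem?_eq_some_iff.mp hget).1

end BestFit

section Run

variable {s : ℝ} {st : List ℝ × ℕ}

lemma length_bbfStep : (bbfStep st s).1.length = st.1.length := by
  unfold bbfStep
  split <;> simp

lemma length_foldl_bbfStep (L : List ℝ) (st : List ℝ × ℕ) :
    (L.foldl bbfStep st).1.length = st.1.length := by
  induction L generalizing st with
  | nil => rfl
  | cons s L ih => rw [List.foldl_cons, ih, length_bbfStep]

lemma bbfStep_of_room {j : ℕ} (hj : j < st.1.length) (hs : 0 ≤ s)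
    (hroom : st.1.getD j 0 + s ≤ 1) :
    (bbfStep st s).2 = st.2 ∧ (bbfStep st s).1.getD j 0 ≤ st.1.getD j 0 + s := by
  rw [List.getD_eq_getElem _ _ hj] at hroom ⊢
  obtain ⟨i, hi⟩ := Option.ne_none_iff_exists'.mp (bestFitIdx_ne_none hj hroom)
  simp only [bbfStep, hi, true_and]
  rw [List.getD_eq_getElem _ _ (by simpa using hj)]
  rcases eq_or_ne i j with rfl | hij
  · simp [List.getElem?_eq_getElem hj]
  · simpa [List.getElem_set_ne hij] using hs

lemma foldl_bbfStep_snd_eq_of_room (L : List ℝ) (hL : ∀ s ∈ L, 0 ≤ s) {j : ℕ}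
    (st : List ℝ × ℕ) (hj : j < st.1.length) (hroom : st.1.getD j 0 + L.sum ≤ 1) :
    (L.foldl bbfStep st).2 = st.2 := by
  induction L generalizing st with
  | nil => rfl
  | cons s L ih =>
    have hs : 0 ≤ s := hL s List.mem_cons_self
    have hL' : ∀ x ∈ L, 0 ≤ x := fun x hx => hL x (List.mem_cons_of_mem s hx)
    have hsum : 0 ≤ L.sum := List.sum_nonneg hL'
    rw [List.sum_cons] at hroom
    obtain ⟨hclosed, hload⟩ := bbfStep_of_room hj hs (by linarith)
    rw [List.foldl_cons, ih hL' _ (by rwa [length_bbfStep]) (by linarith), hclosed]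

lemma foldl_bbfStep_snd_le_succ (L : List ℝ) (hsum : L.sum ≤ 1) (hL : ∀ s ∈ L, 0 ≤ s)
    (st : List ℝ × ℕ) (hst : st.1 ≠ []) :
    (L.foldl bbfStep st).2 ≤ st.2 + 1 := by
  induction L generalizing st with
  | nil => simp
  | cons s L ih =>
    have hL' : ∀ x ∈ L, 0 ≤ x := fun x hx => hL x (List.mem_cons_of_mem s hx)
    rw [List.sum_cons] at hsum
    rw [List.foldl_cons]
    cases h : bestFitIdx s st.1 with
    | none =>
      have hf := fullestIdx_lt_length hst
      have hnew : (st.1.set (fullestIdx st.1) s).getD (fullestIdx st.1) 0 = s := by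
        simp [List.getD_eq_getElem?_getD, hf]
      have hstep : bbfStep st s = (st.1.set (fullestIdx st.1) s, st.2 + 1) := by
        simp only [bbfStep, h]
      rw [hstep, foldl_bbfStep_snd_eq_of_room L hL' _ (by simpa using hf) (by rwa [hnew])]
    | some i =>
      have hs : 0 ≤ s := hL s List.mem_cons_self
      have hne : (bbfStep st s).1 ≠ [] := by
        rwa [← List.length_pos_iff, length_bbfStep, List.length_pos_iff]
      simpa only [bbfStep, h] using ih (by linarith) hL' _ hne

lemma foldl_flatten_bbfStep_snd_le (P : List (List ℝ))
    (hP : ∀ B ∈ P, B.sum ≤ 1 ∧ ∀ s ∈ B, 0 ≤ s) (st : List ℝ × ℕ) (hst : st.1 ≠ []) :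
    (P.flatten.foldl bbfStep st).2 ≤ st.2 + P.length := by
  induction P generalizing st with
  | nil => simp
  | cons B P ih =>
    obtain ⟨hsum, hB⟩ := hP B List.mem_cons_self
    have hne : (B.foldl bbfStep st).1 ≠ [] := by
      rwa [← List.length_pos_iff, length_foldl_bbfStep, List.length_pos_iff]
    have hfirst := foldl_bbfStep_snd_le_succ B hsum hB st hst
    have hrest := ih (fun B' hB' => hP B' (List.mem_cons_of_mem B hB')) _ hne
    rw [List.flatten_cons, List.foldl_append, List.length_cons]
    omega

end Run

theorem bbf_bounded_by_packing_general (k : ℕ) (hk : 0 < k) (init : List ℝ)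
    (hlen : init.length = k)
    (P : List (List ℝ))
    (hP : ∀ B ∈ P, B.sum ≤ 1 ∧ ∀ s ∈ B, 0 < s) :
    k + (P.flatten.foldl bbfStep (init, 0)).2 ≤ k + P.length := by
  have hinit : init ≠ [] := List.ne_nil_of_length_pos (hlen ▸ hk)
  have hP' : ∀ B ∈ P, B.sum ≤ 1 ∧ ∀ s ∈ B, 0 ≤ s :=
    fun B hB => ⟨(hP B hB).1, fun s hs => ((hP B hB).2 s hs).le⟩
  have hclosed := foldl_flatten_bbfStep_snd_le P hP' (init, 0) hinit
  rw [zero_add] at hclosed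
  exact Nat.add_le_add_left hclosed k

/-- BBF dominance lemma: starting from `k` open bins `init` (possibly already
containing items), if the items of a set `S` are presented to Bounded Best-Fit
in the order in which they appear in a valid packing `P = (B₁,…,B_x)` of `S`
into unit bins, then BBF closes at most `x` bins, hence uses at most `k + x`
bins in total. -/
theorem bbf_bounded_by_packing (k : ℕ) (hk : 0 < k) (init : List ℝ)
    (hlen : init.length = k) (hinit : ∀ l ∈ init, 0 ≤ l ∧ l ≤ 1)
    (P : List (List ℝ))
    (hP : ∀ B ∈ P, B.sum ≤ 1 ∧ ∀ s ∈ B, 0 < s) :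
    k + (P.flatten.foldl bbfStep (init, 0)).2 ≤ k + P.length :=
  bbf_bounded_by_packing_general k hk init hlen P hP
end
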